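/- In the centipede game with m = 2n decision nodes (n ≥ 1), every mixed-strategy Nash equilibrium (σ, τ) satisfies σ(0) = 1; that is, if both players best-respond to each other, player 1 stops at the first node with probability 1. -/

import Mathlib

open Finset

/-- Player 1's payoff in the reduced normal form of the centipede game with
`m = 2n` decision nodes.  Strategy `a < n` means "stop at own `(a+1)`-th node";
`a = n` means "always continue". -/
noncomputable def u1 (n : ℕ) (a b : Fin (n + 1)) : ℝ :=
  if a ≤ b ∧ (a : ℕ) < n then 2 * ((a : ℕ) + 1)
  else if b < a then 2 * ((b : ℕ) + 1) - 1
  else 2 * n + 2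

/-- Player 2's payoff in the reduced normal form of the centipede game. -/
noncomputable def u2 (n : ℕ) (a b : Fin (n + 1)) : ℝ :=
  if a ≤ b ∧ (a : ℕ) < n then 2 * ((a : ℕ) + 1) - 1
  else if b < a then 2 * ((b : ℕ) + 1) + 2
  else 2 * n + 1

/-- A mixed strategy: a probability vector on `Fin (n+1)`. -/
def IsMixed {n : ℕ} (σ : Fin (n + 1) → ℝ) : Prop :=
  (∀ a, 0 ≤ σ a) ∧ ∑ a, σ a = 1

/-- Expected payoff under mixed strategies `σ` (player 1) and `τ` (player 2). -/
noncomputable def Eu {n : ℕ} (u : Fin (n + 1) → Fin (n + 1) → ℝ)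
    (σ τ : Fin (n + 1) → ℝ) : ℝ :=
  ∑ a, ∑ b, σ a * τ b * u a b

/-- `(σ, τ)` is a (mixed) Nash equilibrium. -/
def IsNash (n : ℕ) (σ τ : Fin (n + 1) → ℝ) : Prop :=
  IsMixed σ ∧ IsMixed τ ∧
    (∀ σ', IsMixed σ' → Eu (u1 n) σ' τ ≤ Eu (u1 n) σ τ) ∧
    (∀ τ', IsMixed τ' → Eu (u2 n) σ τ' ≤ Eu (u2 n) σ τ)

/-- The point mass on the pure strategy `a0`. -/
noncomputable def delta {n : ℕ} (a0 : Fin (n + 1)) : Fin (n + 1) → ℝ :=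
  fun a => if a = a0 then 1 else 0

/-!
Let `A` be the latest node in the support of `σ` and `B` the latest in the support of `τ`.
If `A ≤ B`, player 2 gains by stopping at `A - 1` instead of `B`: this earns one more against `A`
and the same against every earlier node. Hence `B < A`, and then player 1 gains by stopping at `B`
instead of `A`, for the symmetric reason. So `A = 0`, i.e. `σ` is the point mass at `0`.
-/

section WeightedSums

variable {ι : Type*} [Fintype ι] {w f g : ι → ℝ}

lemma le_of_pos_of_forall_le_sum (hw₀ : ∀ i, 0 ≤ w i) (hw₁ : ∑ i, w i = 1)
    (hf : ∀ j, f j ≤ ∑ i, w i * f i) {i₀ : ι} (hi₀ : 0 < w i₀) (j : ι) : f j ≤ f i₀ := by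
  set M := ∑ i, w i * f i
  have hgap : ∑ i, w i * (M - f i) = 0 := by
    simp only [mul_sub, sum_sub_distrib, ← sum_mul, hw₁, one_mul, M, sub_self]
  have hterm := (sum_eq_zero_iff_of_nonneg fun i _ => mul_nonneg (hw₀ i) (sub_nonneg.2 (hf i))).1
    hgap i₀ (mem_univ _)
  have hfi₀ : f i₀ = M := by
    rcases mul_eq_zero.1 hterm with h | h
    · exact absurd h hi₀.ne'
    · linarith
  exact hfi₀ ▸ hf j

lemma sum_mul_lt_sum_mul_of_pos (hw : ∀ i, 0 ≤ w i) (hfg : ∀ i, 0 < w i → f i ≤ g i)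
    {i₀ : ι} (hi₀ : 0 < w i₀) (hlt : f i₀ < g i₀) : ∑ i, w i * f i < ∑ i, w i * g i := by
  refine sum_lt_sum (fun i _ => ?_) ⟨i₀, mem_univ _, mul_lt_mul_of_pos_left hlt hi₀⟩
  rcases (hw i).eq_or_lt with h | h
  · simp [← h]
  · exact mul_le_mul_of_nonneg_left (hfg i h) h.le

end WeightedSums

variable {n : ℕ}

section Payoffs

variable {a b : Fin (n + 1)}

lemma u1_self (ha : (a : ℕ) < n) : u1 n a a = 2 * ((a : ℕ) + 1) := by
  simp [u1, ha]

lemma u1_of_lt (h : b < a) : u1 n a b = 2 * ((b : ℕ) + 1) - 1 := by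
  simp [u1, h, h.not_ge]

lemma u2_of_lt (h : b < a) : u2 n a b = 2 * ((b : ℕ) + 1) + 2 := by
  simp [u2, h, h.not_ge]

lemma u2_of_le (h : a ≤ b) : u2 n a b = 2 * (a : ℕ) + 1 := by
  have hba : ¬ b < a := h.not_gt
  by_cases ha : (a : ℕ) < n
  · simp only [u2, h, ha, and_self, if_true]
    ring
  · have han : (a : ℕ) = n := by omega
    simp [u2, hba, han]

end Payoffs

namespace IsMixed

variable {σ : Fin (n + 1) → ℝ}

lemma exists_max_pos (hσ : IsMixed σ) : ∃ A, 0 < σ A ∧ ∀ a, 0 < σ a → a ≤ A := by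
  have hne : (univ.filter fun a => 0 < σ a).Nonempty := by
    by_contra hempty
    have hnonpos : ∀ a ∈ univ, σ a ≤ 0 := fun a _ => not_lt.1 fun ha =>
      hempty ⟨a, mem_filter.2 ⟨mem_univ _, ha⟩⟩
    linarith [sum_nonpos hnonpos, hσ.2]
  exact ⟨_, (mem_filter.1 (max'_mem _ hne)).2,
    fun a ha => le_max' _ a (mem_filter.2 ⟨mem_univ _, ha⟩)⟩

lemma eq_one_of_forall_pos_eq (hσ : IsMixed σ) {a₀ : Fin (n + 1)}
    (h : ∀ a, 0 < σ a → a = a₀) : σ a₀ = 1 := by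
  rw [← hσ.2, sum_eq_single a₀ (fun a _ ha => ?_) (by simp)]
  exact le_antisymm (not_lt.1 fun hpos => ha (h a hpos)) (hσ.1 a)

end IsMixed

lemma delta_isMixed (a₀ : Fin (n + 1)) : IsMixed (delta a₀) :=
  ⟨fun a => by unfold delta; split <;> norm_num, by simp [delta]⟩

section ExpectedPayoff

variable (u : Fin (n + 1) → Fin (n + 1) → ℝ) (σ τ : Fin (n + 1) → ℝ)

lemma Eu_delta_left (a₀ : Fin (n + 1)) : Eu u (delta a₀) τ = ∑ b, τ b * u a₀ b := by
  simp [Eu, delta, mul_comm]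

lemma Eu_delta_right (b₀ : Fin (n + 1)) : Eu u σ (delta b₀) = ∑ a, σ a * u a b₀ := by
  rw [Eu, sum_comm]
  simp [delta, mul_comm]

lemma Eu_eq_sum_Eu_delta_left : Eu u σ τ = ∑ a, σ a * Eu u (delta a) τ := by
  simp only [Eu_delta_left, mul_sum, ← mul_assoc]
  rfl

lemma Eu_eq_sum_Eu_delta_right : Eu u σ τ = ∑ b, τ b * Eu u σ (delta b) := by
  simp only [Eu_delta_right, mul_sum]
  rw [Eu, sum_comm]
  exact sum_congr rfl fun _ _ => sum_congr rfl fun _ _ => by ring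

end ExpectedPayoff

namespace IsNash

variable {σ τ : Fin (n + 1) → ℝ}

lemma le_of_pos_left (h : IsNash n σ τ) {a₀ : Fin (n + 1)} (ha₀ : 0 < σ a₀) (a : Fin (n + 1)) :
    Eu (u1 n) (delta a) τ ≤ Eu (u1 n) (delta a₀) τ :=
  le_of_pos_of_forall_le_sum h.1.1 h.1.2
    (fun a => Eu_eq_sum_Eu_delta_left (u1 n) σ τ ▸ h.2.2.1 _ (delta_isMixed a)) ha₀ a

lemma le_of_pos_right (h : IsNash n σ τ) {b₀ : Fin (n + 1)} (hb₀ : 0 < τ b₀) (b : Fin (n + 1)) :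
    Eu (u2 n) σ (delta b) ≤ Eu (u2 n) σ (delta b₀) :=
  le_of_pos_of_forall_le_sum h.2.1.1 h.2.1.2
    (fun b => Eu_eq_sum_Eu_delta_right (u2 n) σ τ ▸ h.2.2.2 _ (delta_isMixed b)) hb₀ b

end IsNash

lemma Eu_u2_delta_lt_delta_pred {σ : Fin (n + 1) → ℝ} (hσ : ∀ a, 0 ≤ σ a) {A b p : Fin (n + 1)}
    (hsupp : ∀ a, 0 < σ a → a ≤ A) (hA : 0 < σ A) (hAb : A ≤ b) (hp : (p : ℕ) + 1 = A) :
    Eu (u2 n) σ (delta b) < Eu (u2 n) σ (delta p) := by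
  have hpA : p < A := by omega
  have hgain : u2 n A b < u2 n A p := by
    rw [u2_of_le hAb, u2_of_lt hpA, ← hp]
    push_cast
    linarith
  rw [Eu_delta_right, Eu_delta_right]
  refine sum_mul_lt_sum_mul_of_pos hσ (fun a ha => ?_) hA hgain
  rcases (hsupp a ha).lt_or_eq with haA | rfl
  · have hap : a ≤ p := by omega
    rw [u2_of_le (hap.trans (hpA.le.trans hAb)), u2_of_le hap]
  · exact hgain.le

lemma Eu_u1_delta_lt_delta_of_lt {τ : Fin (n + 1) → ℝ} (hτ : ∀ b, 0 ≤ τ b) {A B : Fin (n + 1)}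
    (hsupp : ∀ b, 0 < τ b → b ≤ B) (hB : 0 < τ B) (hBA : B < A) :
    Eu (u1 n) (delta A) τ < Eu (u1 n) (delta B) τ := by
  have hgain : u1 n A B < u1 n B B := by
    rw [u1_of_lt hBA, u1_self (by omega)]
    linarith
  rw [Eu_delta_left, Eu_delta_left]
  refine sum_mul_lt_sum_mul_of_pos hτ (fun b hb => ?_) hB hgain
  rcases (hsupp b hb).lt_or_eq with hbB | rfl
  · rw [u1_of_lt (hbB.trans hBA), u1_of_lt hbB]
  · exact hgain.le

theorem nash_sigma_zero_eq_one_general (n : ℕ)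
    (σ τ : Fin (n + 1) → ℝ) (h : IsNash n σ τ) : σ 0 = 1 := by
  obtain ⟨A, hA, hAmax⟩ := h.1.exists_max_pos
  obtain ⟨B, hB, hBmax⟩ := h.2.1.exists_max_pos
  suffices hA0 : A = 0 from
    h.1.eq_one_of_forall_pos_eq fun a ha => le_antisymm (hA0 ▸ hAmax a ha) a.zero_le
  by_contra hA0
  have hBA : B < A := by
    refine lt_of_not_ge fun hAB => ?_
    have hp : ((A.pred hA0).castSucc : ℕ) + 1 = A := by
      simp only [Fin.val_castSucc, Fin.val_pred]
      have := Fin.pos_iff_ne_zero.2 hA0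
      omega
    exact (Eu_u2_delta_lt_delta_pred h.1.1 hAmax hA hAB hp).not_ge (h.le_of_pos_right hB _)
  exact (Eu_u1_delta_lt_delta_of_lt h.2.1.1 hBmax hB hBA).not_ge (h.le_of_pos_left hA B)

/-- In every mixed-strategy Nash equilibrium `(σ, τ)` of the
centipede game with `m = 2n` nodes (`n ≥ 1`), player 1 stops at the first
node with probability 1: `σ 0 = 1`. -/
theorem nash_sigma_zero_eq_one (n : ℕ) (hn : 1 ≤ n)
    (σ τ : Fin (n + 1) → ℝ) (h : IsNash n σ τ) : σ 0 = 1 :=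
  nash_sigma_zero_eq_one_general n σ τ h
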